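/- Let m, n be positive integers, r = min(m,n), and let Z be a real m×n matrix. Then ‖Z‖_* equals the minimum of Σ_{k=1}^r d_k over all tuples (d, α, β) with d ∈ ℝ^r, d_k ≥ 0, α_k ∈ ℝ^m, ‖α_k‖₂ ≤ 1, β_k ∈ ℝ^n, ‖β_k‖₂ ≤ 1 for all k, such that Z = Σ_{k=1}^r d_k α_k β_kᵀ, and this minimum is attained (in particular it is attained by a singular value decomposition of Z). (Variational characterization of the nuclear norm underlying relaxed spectral regularization.) -/

import Mathlib

open scoped BigOperators

/-- The nuclear norm of a real matrix: the sum of the square roots of the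
eigenvalues of `Zᵀ * Z` (i.e. the sum of the singular values of `Z`). -/
noncomputable def nuclearNorm {m n : ℕ} (Z : Matrix (Fin m) (Fin n) ℝ) : ℝ :=
  ∑ j, Real.sqrt ((show (Z.transpose * Z).IsHermitian by
    simpa using Matrix.isHermitian_conjTranspose_mul_self Z).eigenvalues j)

/-- The Euclidean (ℓ²) norm of a vector in `ℝ^m`. -/
noncomputable def l2norm {m : ℕ} (x : Fin m → ℝ) : ℝ := Real.sqrt (∑ i, x i ^ 2)

/-- `∑ k, d k • (α k) (β k)ᵀ`, a sum of scaled rank-one matrices. -/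
noncomputable def rankOneSum {m n r : ℕ} (d : Fin r → ℝ) (α : Fin r → Fin m → ℝ)
    (β : Fin r → Fin n → ℝ) : Matrix (Fin m) (Fin n) ℝ :=
  ∑ k, d k • Matrix.vecMulVec (α k) (β k)

/-!
The singular value decomposition `Z = ∑ⱼ σⱼ uⱼ vⱼᵀ`, with `vⱼ` an orthonormal eigenbasis of `ZᵀZ`,
`σⱼ = √λⱼ` and `uⱼ = σⱼ⁻¹ Z vⱼ`, has only `rank Z ≤ min m n` nonzero terms, so it fits into `r`
slots and is a feasible decomposition of value `∑ⱼ σⱼ = ‖Z‖_*`. Conversely, for any feasible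
`Z = ∑ₖ dₖ αₖ βₖᵀ` we have `∑ⱼ σⱼ = ∑ⱼ uⱼᵀ Z vⱼ = ∑ₖ dₖ ∑ⱼ (uⱼ ⬝ αₖ)(vⱼ ⬝ βₖ)`, and by
Cauchy–Schwarz and Bessel's inequality for the orthonormal families `(uⱼ)_{σⱼ ≠ 0}` and `(vⱼ)` each
inner sum is at most `‖αₖ‖ ‖βₖ‖ ≤ 1`.
-/

open Finset WithLp

theorem l2norm_eq_norm_toLp {m : ℕ} (x : Fin m → ℝ) : l2norm x = ‖toLp 2 x‖ := by
  simp [l2norm, EuclideanSpace.norm_eq]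

theorem Orthonormal.sqrt_sum_inner_sq_le {ι E : Type*} [Fintype ι] [NormedAddCommGroup E]
    [InnerProductSpace ℝ E] {u : ι → E} (hu : Orthonormal ℝ u) (x : E) :
    √(∑ i, inner ℝ (u i) x ^ 2) ≤ ‖x‖ := by
  rw [← Real.sqrt_sq (norm_nonneg x)]
  exact Real.sqrt_le_sqrt <| by
    simpa only [Real.norm_eq_abs, sq_abs] using hu.sum_inner_products_le x

theorem Orthonormal.sum_inner_mul_inner_le {ι E F : Type*} [Fintype ι]
    [NormedAddCommGroup E] [InnerProductSpace ℝ E] [NormedAddCommGroup F] [InnerProductSpace ℝ F]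
    {u : ι → E} {v : ι → F} (hu : Orthonormal ℝ u) (hv : Orthonormal ℝ v) (x : E) (y : F) :
    ∑ i, inner ℝ (u i) x * inner ℝ (v i) y ≤ ‖x‖ * ‖y‖ :=
  (Real.sum_mul_le_sqrt_mul_sqrt _ _ _).trans
    (mul_le_mul (hu.sqrt_sum_inner_sq_le x) (hv.sqrt_sum_inner_sq_le y) (Real.sqrt_nonneg _)
      (norm_nonneg x))

theorem Function.Embedding.exists_subset_range_of_card_le {α β : Type*} [Fintype α] [Fintype β]
    {s : Finset β} (hs : #s ≤ Fintype.card α) (hα : Fintype.card α ≤ Fintype.card β) :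
    ∃ f : α ↪ β, ↑s ⊆ Set.range f := by
  obtain ⟨t, hst, ht⟩ := Finset.exists_superset_card_eq hs hα
  obtain ⟨f, hf⟩ := Function.Embedding.exists_of_card_eq_finset ht.symm
  exact ⟨f, fun x hx => by simpa [← hf] using hst hx⟩

namespace Matrix

variable {m n : Type*} [Fintype m] (Z : Matrix m n ℝ)

theorem isHermitian_transpose_mul_self : (Zᵀ * Z).IsHermitian := by
  simpa using isHermitian_conjTranspose_mul_self Z

variable [Fintype n] [DecidableEq n]

noncomputable def singularValue (j : n) : ℝ :=
  √((isHermitian_transpose_mul_self Z).eigenvalues j)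

noncomputable def rightSingularVector (j : n) : EuclideanSpace ℝ n :=
  (isHermitian_transpose_mul_self Z).eigenvectorBasis j

/-- For `σⱼ = 0` the junk value `0⁻¹ = 0` makes `uⱼ = 0`. -/
noncomputable def leftSingularVector (j : n) : EuclideanSpace ℝ m :=
  (singularValue Z j)⁻¹ • toLp 2 (Z *ᵥ rightSingularVector Z j)

theorem singularValue_nonneg (j : n) : 0 ≤ singularValue Z j := Real.sqrt_nonneg _

theorem orthonormal_rightSingularVector : Orthonormal ℝ (rightSingularVector Z) :=
  (isHermitian_transpose_mul_self Z).eigenvectorBasis.orthonormal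

theorem inner_mulVec_rightSingularVector (i j : n) :
    inner ℝ (toLp 2 (Z *ᵥ rightSingularVector Z i)) (toLp 2 (Z *ᵥ rightSingularVector Z j)) =
      if i = j then singularValue Z i ^ 2 else 0 := by
  set hA := isHermitian_transpose_mul_self Z
  have hev : 0 ≤ hA.eigenvalues i := eigenvalues_conjTranspose_mul_self_nonneg Z i
  have hv := orthonormal_iff_ite.mp (orthonormal_rightSingularVector Z) i j
  calc inner ℝ (toLp 2 (Z *ᵥ rightSingularVector Z i)) (toLp 2 (Z *ᵥ rightSingularVector Z j))
      = ((Zᵀ * Z) *ᵥ rightSingularVector Z i) ⬝ᵥ rightSingularVector Z j := by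
        rw [EuclideanSpace.inner_toLp_toLp, star_trivial, dotProduct_comm, dotProduct_mulVec,
          ← mulVec_transpose, mulVec_mulVec]
    _ = hA.eigenvalues i * inner ℝ (rightSingularVector Z i) (rightSingularVector Z j) := by
        rw [rightSingularVector, hA.mulVec_eigenvectorBasis, smul_dotProduct, smul_eq_mul,
          EuclideanSpace.inner_eq_star_dotProduct, star_trivial, dotProduct_comm]
    _ = if i = j then singularValue Z i ^ 2 else 0 := by
        rw [hv, singularValue, Real.sq_sqrt hev]
        split_ifs <;> simp

theorem singularValue_smul_leftSingularVector (j : n) :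
    singularValue Z j • leftSingularVector Z j = toLp 2 (Z *ᵥ rightSingularVector Z j) := by
  by_cases hσ : singularValue Z j = 0
  · have h := inner_mulVec_rightSingularVector Z j j
    rw [if_pos rfl, hσ, real_inner_self_eq_norm_sq] at h
    rw [hσ, zero_smul, eq_comm, ← norm_eq_zero]
    simpa using h
  · rw [leftSingularVector, smul_smul, mul_inv_cancel₀ hσ, one_smul]

theorem inner_leftSingularVector (i j : n) :
    inner ℝ (leftSingularVector Z i) (leftSingularVector Z j) =
      if i = j ∧ singularValue Z i ≠ 0 then 1 else 0 := by
  rw [leftSingularVector, leftSingularVector, inner_smul_left, inner_smul_right,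
    inner_mulVec_rightSingularVector]
  by_cases hij : i = j
  · subst hij
    by_cases hσ : singularValue Z i = 0
    · simp [hσ]
    · rw [if_pos rfl, if_pos ⟨rfl, hσ⟩, conj_trivial]
      field_simp
  · simp [hij]

theorem orthonormal_leftSingularVector :
    Orthonormal ℝ (fun j : {j // singularValue Z j ≠ 0} => leftSingularVector Z j) := by
  refine orthonormal_iff_ite.mpr fun i j => ?_
  rw [inner_leftSingularVector]
  simp [Subtype.ext_iff, i.2]

theorem norm_leftSingularVector_le_one (j : n) : ‖leftSingularVector Z j‖ ≤ 1 := by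
  have h := inner_leftSingularVector Z j j
  rw [real_inner_self_eq_norm_sq] at h
  split_ifs at h <;> nlinarith [norm_nonneg (leftSingularVector Z j)]

theorem inner_leftSingularVector_mulVec (j : n) :
    inner ℝ (leftSingularVector Z j) (toLp 2 (Z *ᵥ rightSingularVector Z j)) =
      singularValue Z j := by
  rw [← singularValue_smul_leftSingularVector, inner_smul_right, inner_leftSingularVector]
  by_cases hσ : singularValue Z j = 0 <;> simp [hσ]

theorem sum_singularValue_smul_vecMulVec :
    ∑ j, singularValue Z j • vecMulVec (leftSingularVector Z j) (rightSingularVector Z j) =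
      Z := by
  refine ext_iff_mulVec.mpr fun x => ?_
  have hx := (isHermitian_transpose_mul_self Z).eigenvectorBasis.sum_repr' (toLp 2 x)
  conv_rhs => rw [← ofLp_toLp 2 x, ← hx]
  simp only [sum_mulVec, smul_mulVec, vecMulVec_mulVec, ofLp_sum, mulVec_sum, ofLp_smul,
    mulVec_smul]
  refine Finset.sum_congr rfl fun j _ => ?_
  have hZv : Z *ᵥ rightSingularVector Z j = singularValue Z j • leftSingularVector Z j := by
    rw [← ofLp_smul, singularValue_smul_leftSingularVector, ofLp_toLp]
  change _ = inner ℝ (rightSingularVector Z j) (toLp 2 x) • Z *ᵥ rightSingularVector Z j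
  rw [hZv, EuclideanSpace.inner_eq_star_dotProduct, star_trivial, op_smul_eq_smul, ofLp_toLp,
    smul_comm, dotProduct_comm]

theorem card_singularValue_ne_zero : #{j | singularValue Z j ≠ 0} = Z.rank := by
  rw [← rank_conjTranspose_mul_self, conjTranspose_eq_transpose_of_trivial,
    (isHermitian_transpose_mul_self Z).rank_eq_card_non_zero_eigs, Fintype.card_subtype]
  congr! 2 with j
  exact not_congr (Real.sqrt_eq_zero (eigenvalues_conjTranspose_mul_self_nonneg Z j))

theorem inner_leftSingularVector_vecMulVec_mulVec (j : n) (a : m → ℝ) (b : n → ℝ) :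
    inner ℝ (leftSingularVector Z j) (toLp 2 (vecMulVec a b *ᵥ rightSingularVector Z j)) =
      inner ℝ (leftSingularVector Z j) (toLp 2 a) *
        inner ℝ (rightSingularVector Z j) (toLp 2 b) := by
  rw [vecMulVec_mulVec, op_smul_eq_smul, toLp_smul, inner_smul_right, mul_comm,
    EuclideanSpace.inner_eq_star_dotProduct (rightSingularVector Z j), star_trivial, ofLp_toLp]

theorem sum_singularValue_le {κ : Type*} [Fintype κ] (d : κ → ℝ) (α : κ → m → ℝ)
    (β : κ → n → ℝ) (hd : ∀ k, 0 ≤ d k) (hα : ∀ k, ‖toLp 2 (α k)‖ ≤ 1)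
    (hβ : ∀ k, ‖toLp 2 (β k)‖ ≤ 1) (hZ : Z = ∑ k, d k • vecMulVec (α k) (β k)) :
    ∑ j, singularValue Z j ≤ ∑ k, d k := by
  let S := {j // singularValue Z j ≠ 0}
  have hσ (j : n) : singularValue Z j = ∑ k, d k *
      (inner ℝ (leftSingularVector Z j) (toLp 2 (α k)) *
        inner ℝ (rightSingularVector Z j) (toLp 2 (β k))) := by
    rw [← inner_leftSingularVector_mulVec, hZ, sum_mulVec, toLp_sum, inner_sum]
    simp only [smul_mulVec, toLp_smul, inner_smul_right, inner_leftSingularVector_vecMulVec_mulVec]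
  calc ∑ j, singularValue Z j = ∑ j : S, singularValue Z j :=
        (Fintype.sum_of_injective _ Subtype.val_injective _ _ (by simp) fun _ => rfl).symm
    _ = ∑ k, d k * ∑ j : S, inner ℝ (leftSingularVector Z j) (toLp 2 (α k)) *
          inner ℝ (rightSingularVector Z j) (toLp 2 (β k)) := by
        simp only [hσ, mul_sum]
        exact sum_comm
    _ ≤ ∑ k, d k * (‖toLp 2 (α k)‖ * ‖toLp 2 (β k)‖) := by
        gcongr with k
        exacts [hd k, (orthonormal_leftSingularVector Z).sum_inner_mul_inner_le
          ((orthonormal_rightSingularVector Z).comp _ Subtype.val_injective) _ _]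
    _ ≤ ∑ k, d k := by
        gcongr with k
        exact mul_le_of_le_one_right (hd k) (mul_le_one₀ (hα k) (norm_nonneg _) (hβ k))

theorem exists_embedding_sum_singularValue_smul_vecMulVec {κ : Type*} [Fintype κ]
    (hrank : Z.rank ≤ Fintype.card κ) (hκ : Fintype.card κ ≤ Fintype.card n) :
    ∃ g : κ ↪ n,
      Z = ∑ k, singularValue Z (g k) •
        vecMulVec (leftSingularVector Z (g k)) (rightSingularVector Z (g k)) ∧
      ∑ k, singularValue Z (g k) = ∑ j, singularValue Z j := by
  rw [← card_singularValue_ne_zero] at hrank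
  obtain ⟨g, hg⟩ := Function.Embedding.exists_subset_range_of_card_le hrank hκ
  have hzero : ∀ j ∉ Set.range g, singularValue Z j = 0 := fun j hj =>
    not_not.mp fun h => hj (hg (by simpa using h))
  refine ⟨g, (sum_singularValue_smul_vecMulVec Z).symm.trans ?_,
    Fintype.sum_of_injective g g.injective _ _ hzero fun _ => rfl⟩
  exact (Fintype.sum_of_injective g g.injective _ _
    (fun j hj => by rw [hzero j hj, zero_smul]) fun _ => rfl).symm

end Matrix

theorem nuclearNorm_eq_min_relaxed_decomposition_general
    (m n : ℕ) (r : ℕ) (hr : r = min m n)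
    (Z : Matrix (Fin m) (Fin n) ℝ) :
    IsLeast {s : ℝ | ∃ (d : Fin r → ℝ) (α : Fin r → Fin m → ℝ) (β : Fin r → Fin n → ℝ),
        (∀ k, 0 ≤ d k) ∧ (∀ k, l2norm (α k) ≤ 1) ∧ (∀ k, l2norm (β k) ≤ 1) ∧
        Z = rankOneSum d α β ∧ s = ∑ k, d k}
      (nuclearNorm Z) := by
  have hnuc : nuclearNorm Z = ∑ j, Z.singularValue j := rfl
  refine ⟨?_, ?_⟩
  · obtain ⟨g, hZ, hsum⟩ := Z.exists_embedding_sum_singularValue_smul_vecMulVec (κ := Fin r)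
      (by simpa [hr] using ⟨Z.rank_le_height, Z.rank_le_width⟩) (by simp [hr])
    refine ⟨fun k => Z.singularValue (g k), fun k => Z.leftSingularVector (g k),
      fun k => Z.rightSingularVector (g k), fun k => Z.singularValue_nonneg _, fun k => ?_,
      fun k => ?_, hZ, hnuc.trans hsum.symm⟩
    · rw [l2norm_eq_norm_toLp, toLp_ofLp]
      exact Z.norm_leftSingularVector_le_one _
    · rw [l2norm_eq_norm_toLp, toLp_ofLp]
      exact (Z.orthonormal_rightSingularVector.1 _).le
  · rintro s ⟨d, α, β, hd, hα, hβ, hZ, rfl⟩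
    simp only [l2norm_eq_norm_toLp] at hα hβ
    exact hnuc ▸ Z.sum_singularValue_le d α β hd hα hβ hZ

/-- The nuclear norm of `Z` is the attained minimum of `∑ k, d k` over all
decompositions `Z = ∑ k, d k • (α k)(β k)ᵀ` with `d k ≥ 0`, `‖α k‖₂ ≤ 1`,
`‖β k‖₂ ≤ 1`. -/
theorem nuclearNorm_eq_min_relaxed_decomposition
    (m n : ℕ) (hm : 0 < m) (hn : 0 < n) (r : ℕ) (hr : r = min m n)
    (Z : Matrix (Fin m) (Fin n) ℝ) :
    IsLeast {s : ℝ | ∃ (d : Fin r → ℝ) (α : Fin r → Fin m → ℝ) (β : Fin r → Fin n → ℝ),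
        (∀ k, 0 ≤ d k) ∧ (∀ k, l2norm (α k) ≤ 1) ∧ (∀ k, l2norm (β k) ≤ 1) ∧
        Z = rankOneSum d α β ∧ s = ∑ k, d k}
      (nuclearNorm Z) :=
  nuclearNorm_eq_min_relaxed_decomposition_general m n r hr Z
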